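/- arXiv:0807.3868 — 2 statements merged into one kernel-verified Lean document; each statement's English description precedes it below -/
import Mathlib

section
/- For the Gamma(m,1) distribution with density f^{(m)}(t) = t^{m-1} e^{-t}/(m-1)! and distribution function F^{(m)}, the quantity F^{(m)}(t)(1 - F^{(m)}(t))·|d/dt f^{(m)}(t)| / (f^{(m)}(t))^2 is bounded by some finite constant γ = γ(m) uniformly over t ∈ (0,∞). -/
/-- The Gamma(m,1) distribution function. -/
noncomputable def gammaCDF (m : ℕ) (t : ℝ) : ℝ :=
  (∫ x in (0:ℝ)..t, x ^ (m - 1) * Real.exp (-x)) / (Nat.factorial (m - 1) : ℝ)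

/-- The Gamma(m,1) density `f^{(m)}(t) = t^{m-1} e^{-t} / (m-1)!`. -/
noncomputable def gammaDens (m : ℕ) (t : ℝ) : ℝ :=
  t ^ (m - 1) * Real.exp (-t) / (Nat.factorial (m - 1) : ℝ)

/-!
Write `m = n + 1` and `S_n(t) = ∑_{k ≤ n} t^k / k!`. Differentiating shows `1 - F = e^{-t} S_n(t)`,
and `f' = ((n - t) / t) f`, so the exponentials cancel and the quantity equals
`F · S_n(t) · |n - t| · n! / t^{n+1}`. For `t ≤ 1` this is at most `n + 1`, by
`F ≤ t^{n+1} / (n+1)!` and `S_n ≤ n + 1`; for `t ≥ 1` it is at most `(n+1)² n!`, by `F ≤ 1`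
and `S_n ≤ (n + 1) t^n`.
-/

open Real Finset Nat

noncomputable def expPartialSum (n : ℕ) (t : ℝ) : ℝ := ∑ k ∈ range (n + 1), t ^ k / k !

section expPartialSum

variable (n : ℕ) {t : ℝ}

lemma expPartialSum_zero_right : expPartialSum n 0 = 1 := by
  rw [expPartialSum, sum_eq_single 0 (fun k _ hk ↦ by simp [zero_pow hk]) (by simp)]
  simp

lemma expPartialSum_nonneg (ht : 0 ≤ t) : 0 ≤ expPartialSum n t :=
  sum_nonneg fun _ _ ↦ by positivity

lemma expPartialSum_le (ht : 0 ≤ t) : expPartialSum n t ≤ (n + 1) * max 1 t ^ n := by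
  calc expPartialSum n t ≤ ∑ _k ∈ range (n + 1), max 1 t ^ n := by
        refine sum_le_sum fun k hk ↦ ?_
        calc t ^ k / k ! ≤ t ^ k := div_le_self (by positivity) (mod_cast k.factorial_pos)
          _ ≤ max 1 t ^ k := pow_le_pow_left₀ ht (le_max_right 1 t) k
          _ ≤ max 1 t ^ n :=
            pow_le_pow_right₀ (le_max_left 1 t) (Nat.lt_succ_iff.mp (mem_range.mp hk))
    _ = (n + 1) * max 1 t ^ n := by simp

lemma hasDerivAt_expPartialSum (t : ℝ) :
    HasDerivAt (expPartialSum n) (expPartialSum n t - t ^ n / n !) t := by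
  have h : HasDerivAt (expPartialSum n) (∑ k ∈ range (n + 1), k * t ^ (k - 1) / k !) t :=
    .fun_sum fun k _ ↦ (hasDerivAt_pow k t).div_const _
  refine h.congr_deriv ?_
  rw [expPartialSum, sum_range_succ (fun k ↦ t ^ k / k !), add_sub_cancel_right, sum_range_succ']
  simp only [CharP.cast_eq_zero, zero_mul, zero_div, add_zero]
  refine sum_congr rfl fun k _ ↦ ?_
  rw [factorial_succ, add_tsub_cancel_right]
  push_cast
  field_simp

lemma hasDerivAt_exp_neg_mul_expPartialSum (t : ℝ) :
    HasDerivAt (fun x ↦ exp (-x) * expPartialSum n x) (-(t ^ n * exp (-t) / n !)) t := by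
  have h := ((hasDerivAt_neg t).exp).mul (hasDerivAt_expPartialSum n t)
  refine h.congr_deriv ?_
  ring

end expPartialSum

section gamma

variable (n : ℕ) {t : ℝ}

lemma gammaDens_succ (t : ℝ) : gammaDens (n + 1) t = t ^ n * exp (-t) / n ! := by
  simp [gammaDens]

lemma gammaDens_succ_pos (ht : 0 < t) : 0 < gammaDens (n + 1) t := by
  rw [gammaDens_succ]; positivity

lemma hasDerivAt_gammaDens_succ (ht : t ≠ 0) :
    HasDerivAt (gammaDens (n + 1)) ((n - t) / t * gammaDens (n + 1) t) t := by
  have h := ((hasDerivAt_pow n t).mul (hasDerivAt_neg t).exp).div_const (n ! : ℝ)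
  rw [show gammaDens (n + 1) = fun x ↦ x ^ n * exp (-x) / n ! from funext (gammaDens_succ n)]
  refine h.congr_deriv ?_
  rcases n with _ | n
  · simp [neg_div, div_self ht]
  · simp only [add_tsub_cancel_right, pow_succ]
    field_simp
    push_cast
    ring

lemma gammaCDF_succ (t : ℝ) : gammaCDF (n + 1) t = 1 - exp (-t) * expPartialSum n t := by
  have hderiv : ∀ x ∈ Set.uIcc 0 t, HasDerivAt (fun x ↦ -(n ! * (exp (-x) * expPartialSum n x)))
      (x ^ n * exp (-x)) x := fun x _ ↦
    ((hasDerivAt_exp_neg_mul_expPartialSum n x).const_mul _).neg.congr_deriv (by field_simp)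
  rw [gammaCDF, add_tsub_cancel_right,
    intervalIntegral.integral_eq_sub_of_hasDerivAt hderiv
      ((by fun_prop : Continuous _).intervalIntegrable _ _), expPartialSum_zero_right,
    neg_zero, exp_zero]
  field_simp
  ring

lemma gammaCDF_nonneg (m : ℕ) (ht : 0 ≤ t) : 0 ≤ gammaCDF m t :=
  div_nonneg (intervalIntegral.integral_nonneg ht fun x hx ↦ by have := hx.1; positivity)
    (by positivity)

lemma gammaCDF_succ_le_one (ht : 0 ≤ t) : gammaCDF (n + 1) t ≤ 1 := by
  rw [gammaCDF_succ, sub_le_self_iff]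
  exact mul_nonneg (exp_pos _).le (expPartialSum_nonneg n ht)

lemma gammaCDF_succ_le_pow (ht : 0 ≤ t) : gammaCDF (n + 1) t ≤ t ^ (n + 1) / (n + 1) ! := by
  have hmono : ∫ x in (0 : ℝ)..t, x ^ n * exp (-x) ≤ ∫ x in (0 : ℝ)..t, x ^ n :=
    intervalIntegral.integral_mono_on ht ((by fun_prop : Continuous _).intervalIntegrable _ _)
      ((by fun_prop : Continuous _).intervalIntegrable _ _) fun x hx ↦
      mul_le_of_le_one_right (pow_nonneg hx.1 n) (exp_le_one_iff.mpr (by linarith [hx.1]))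
  rw [integral_pow] at hmono
  rw [gammaCDF, add_tsub_cancel_right, factorial_succ, Nat.cast_mul, ← div_div]
  gcongr
  simpa using hmono

lemma gamma_score_eq (ht : 0 < t) :
    gammaCDF (n + 1) t * (1 - gammaCDF (n + 1) t) * |deriv (gammaDens (n + 1)) t|
        / gammaDens (n + 1) t ^ 2
      = gammaCDF (n + 1) t * expPartialSum n t * |n - t| * n ! / t ^ (n + 1) := by
  have hf := gammaDens_succ_pos n ht
  rw [(hasDerivAt_gammaDens_succ n ht.ne').deriv, abs_mul, abs_of_pos hf, abs_div, abs_of_pos ht]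
  nth_rw 2 [gammaCDF_succ]
  rw [gammaDens_succ]
  field_simp
  ring

lemma gammaCDF_mul_expPartialSum_le_of_le_one (ht : 0 ≤ t) (ht1 : t ≤ 1) :
    gammaCDF (n + 1) t * expPartialSum n t * |n - t| * n ! ≤ (n + 1) * t ^ (n + 1) := by
  have hS : expPartialSum n t ≤ n + 1 := by
    simpa [max_eq_left ht1] using expPartialSum_le n ht
  have hnt : |(n : ℝ) - t| ≤ n + 1 := abs_sub_le_iff.mpr ⟨by linarith, by linarith⟩
  calc gammaCDF (n + 1) t * expPartialSum n t * |n - t| * n !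
      ≤ t ^ (n + 1) / (n + 1) ! * (n + 1) * (n + 1) * n ! := by
        gcongr
        · exact expPartialSum_nonneg n ht
        · exact gammaCDF_succ_le_pow n ht
    _ = (n + 1) * t ^ (n + 1) := by
        rw [factorial_succ]
        push_cast
        field_simp

lemma gammaCDF_mul_expPartialSum_le_of_one_le (ht1 : 1 ≤ t) :
    gammaCDF (n + 1) t * expPartialSum n t * |n - t| * n ! ≤ (n + 1) ^ 2 * n ! * t ^ (n + 1) := by
  have ht : 0 ≤ t := by linarith
  have hS : expPartialSum n t ≤ (n + 1) * t ^ n := by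
    simpa [max_eq_right ht1] using expPartialSum_le n ht
  have hnt : |(n : ℝ) - t| ≤ (n + 1) * t := abs_sub_le_iff.mpr ⟨by nlinarith, by nlinarith⟩
  calc gammaCDF (n + 1) t * expPartialSum n t * |n - t| * n !
      ≤ 1 * ((n + 1) * t ^ n) * ((n + 1) * t) * n ! := by
        gcongr
        · exact expPartialSum_nonneg n ht
        · exact gammaCDF_succ_le_one n ht
    _ = (n + 1) ^ 2 * n ! * t ^ (n + 1) := by ring

end gamma

/-- The quantity `F^{(m)}(t)(1-F^{(m)}(t)) |f^{(m)}'(t)| / f^{(m)}(t)²` is uniformly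
bounded over `t ∈ (0,∞)` by a finite constant `γ = γ(m)`. -/
theorem gamma_score_bounded (m : ℕ) (hm : 1 ≤ m) :
    ∃ γ : ℝ, ∀ t : ℝ, 0 < t →
      gammaCDF m t * (1 - gammaCDF m t) * |deriv (gammaDens m) t| / (gammaDens m t) ^ 2
        ≤ γ := by
  obtain ⟨n, rfl⟩ : ∃ n, m = n + 1 := ⟨m - 1, by omega⟩
  refine ⟨(n + 1) ^ 2 * n !, fun t ht ↦ ?_⟩
  rw [gamma_score_eq n ht, div_le_iff₀ (by positivity)]
  rcases le_total t 1 with ht1 | ht1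
  · refine (gammaCDF_mul_expPartialSum_le_of_le_one n ht.le ht1).trans ?_
    have : (1 : ℝ) ≤ n ! := mod_cast n.factorial_pos
    gcongr
    nlinarith
  · exact gammaCDF_mul_expPartialSum_le_of_one_le n ht1
end

section
/- For the Gamma(m,1) distribution, lim_{t→∞} F^{(m)}(t)(1 - F^{(m)}(t))·|d/dt f^{(m)}(t)| / (f^{(m)}(t))^2 = 1. -/
/-!
`F' = f` and `f' = f · ((m - 1)/t - 1)`, so L'Hôpital's rule gives `(1 - F)/f → 1`, while
`F → 1` because `∫₀^∞ x^(m-1) e^(-x) dx = Γ(m) = (m - 1)!`. The quantity in question is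
`F · ((1 - F)/f) · (|f'|/f)`, a product of three factors tending to `1`.
-/

open Filter

open Set MeasureTheory Real Topology Nat

lemma exp_neg_mul_rpow_natCast_add_one_sub_one (n : ℕ) :
    (fun x : ℝ => exp (-x) * x ^ ((n : ℝ) + 1 - 1)) = fun x => x ^ n * exp (-x) := by
  ext x
  rw [add_sub_cancel_right, rpow_natCast, mul_comm]

lemma integrableOn_pow_mul_exp_neg_Ioi (n : ℕ) :
    IntegrableOn (fun x : ℝ => x ^ n * exp (-x)) (Ioi 0) :=
  exp_neg_mul_rpow_natCast_add_one_sub_one n ▸ GammaIntegral_convergent (by positivity)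

lemma integral_pow_mul_exp_neg_Ioi (n : ℕ) : ∫ x in Ioi 0, x ^ n * exp (-x) = n ! := by
  rw [← exp_neg_mul_rpow_natCast_add_one_sub_one, ← Gamma_eq_integral (by positivity),
    Gamma_nat_eq_factorial]

lemma tendsto_gammaCDF_atTop (m : ℕ) : Tendsto (gammaCDF m) atTop (𝓝 1) := by
  have h := (intervalIntegral_tendsto_integral_Ioi 0 (integrableOn_pow_mul_exp_neg_Ioi (m - 1))
    tendsto_id).div_const ((m - 1)! : ℝ)
  rwa [integral_pow_mul_exp_neg_Ioi, div_self (by positivity)] at h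

lemma hasDerivAt_gammaCDF (m : ℕ) (t : ℝ) : HasDerivAt (gammaCDF m) (gammaDens m t) t :=
  ((Continuous.integral_hasStrictDerivAt (by fun_prop) 0 t).hasDerivAt).div_const _

lemma hasDerivAt_gammaDens (m : ℕ) {t : ℝ} (ht : t ≠ 0) :
    HasDerivAt (gammaDens m) (gammaDens m t * (((m - 1 : ℕ) : ℝ) / t - 1)) t := by
  have h := ((hasDerivAt_pow (m - 1) t).mul ((hasDerivAt_neg t).exp)).div_const
    ((m - 1)! : ℝ)
  refine h.congr_deriv ?_
  unfold gammaDens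
  rcases m - 1 with _ | n
  · simp
  · rw [pow_succ]
    field_simp
    push_cast
    ring

lemma gammaDens_pos (m : ℕ) {t : ℝ} (ht : 0 < t) : 0 < gammaDens m t := by
  unfold gammaDens
  positivity

lemma tendsto_gammaDens_atTop (m : ℕ) : Tendsto (gammaDens m) atTop (𝓝 0) := by
  have h := (tendsto_pow_mul_exp_neg_atTop_nhds_zero (m - 1)).div_const ((m - 1)! : ℝ)
  rwa [zero_div] at h

lemma tendsto_one_sub_gammaCDF_div_gammaDens (m : ℕ) :
    Tendsto (fun t => (1 - gammaCDF m t) / gammaDens m t) atTop (𝓝 1) := by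
  set N : ℝ := ((m - 1 : ℕ) : ℝ)
  have hN : Tendsto (fun t : ℝ => N / t) atTop (𝓝 0) := tendsto_const_nhds.div_atTop tendsto_id
  have hratio :
      Tendsto (fun t => -gammaDens m t / (gammaDens m t * (N / t - 1))) atTop (𝓝 1) := by
    have h := ((tendsto_const_nhds (x := (1 : ℝ))).sub hN).inv₀ (by norm_num)
    rw [sub_zero, inv_one] at h
    refine h.congr' ?_
    filter_upwards [eventually_gt_atTop 0] with t ht
    have := (gammaDens_pos m ht).ne'
    rw [neg_div, ← div_neg, ← mul_neg, neg_sub, div_mul_cancel_left₀ this]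
  refine HasDerivAt.lhopital_zero_atTop
    (Eventually.of_forall fun t => (hasDerivAt_gammaCDF m t).const_sub 1) ?_ ?_
    (by simpa using (tendsto_gammaCDF_atTop m).const_sub 1) (tendsto_gammaDens_atTop m) hratio
  · filter_upwards [eventually_gt_atTop 0] with t ht using hasDerivAt_gammaDens m ht.ne'
  · filter_upwards [eventually_gt_atTop 0, eventually_gt_atTop N] with t ht htN
    have : N / t < 1 := (div_lt_one ht).2 htN
    exact mul_ne_zero (gammaDens_pos m ht).ne' (by linarith)

lemma tendsto_abs_deriv_gammaDens_div_gammaDens (m : ℕ) :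
    Tendsto (fun t => |deriv (gammaDens m) t| / gammaDens m t) atTop (𝓝 1) := by
  have hN : Tendsto (fun t : ℝ => ((m - 1 : ℕ) : ℝ) / t) atTop (𝓝 0) :=
    tendsto_const_nhds.div_atTop tendsto_id
  have h := (hN.sub_const 1).abs
  rw [zero_sub, abs_neg, abs_one] at h
  refine h.congr' ?_
  filter_upwards [eventually_gt_atTop 0] with t ht
  have hpos := gammaDens_pos m ht
  rw [(hasDerivAt_gammaDens m ht.ne').deriv, abs_mul, abs_of_pos hpos,
    mul_div_cancel_left₀ _ hpos.ne']

theorem gamma_score_limit_atTop_general (m : ℕ) :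
    Tendsto
      (fun t : ℝ =>
        gammaCDF m t * (1 - gammaCDF m t) * |deriv (gammaDens m) t| / (gammaDens m t) ^ 2)
      atTop (nhds 1) := by
  have h := ((tendsto_gammaCDF_atTop m).mul (tendsto_one_sub_gammaCDF_div_gammaDens m)).mul
    (tendsto_abs_deriv_gammaDens_div_gammaDens m)
  rw [mul_one, mul_one] at h
  refine h.congr' ?_
  filter_upwards [eventually_gt_atTop 0] with t ht
  have := (gammaDens_pos m ht).ne'
  field_simp

/-- `F^{(m)}(t)(1-F^{(m)}(t)) |f^{(m)}'(t)| / f^{(m)}(t)² → 1` as `t → ∞`. -/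
theorem gamma_score_limit_atTop (m : ℕ) (hm : 1 ≤ m) :
    Tendsto
      (fun t : ℝ =>
        gammaCDF m t * (1 - gammaCDF m t) * |deriv (gammaDens m) t| / (gammaDens m t) ^ 2)
      atTop (nhds 1) :=
  gamma_score_limit_atTop_general m
end
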